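/- Let {K_1, ..., K_{d+1}} be a well separated family of compact connected sets in R^d. Then the family {conv(ℓ(K_1)), ..., conv(ℓ(K_{d+1}))} in R^{d+1}, where ℓ(x) = (x, |x|^2) is the paraboloid lifting, is well separated in R^{d+1}. -/

import Mathlib

open Set MeasureTheory

/-- The paraboloid lifting `ℓ(x) = (x, |x|²)`. -/
noncomputable def plift (d : ℕ) (x : EuclideanSpace ℝ (Fin d)) :
    EuclideanSpace ℝ (Fin (d + 1)) :=
  WithLp.toLp 2 fun i : Fin (d + 1) => if h : (i : ℕ) < d then x ⟨i, h⟩ else ‖x‖ ^ 2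

/-- The projection to the first `d` coordinates. -/
noncomputable def pproj (d : ℕ) (y : EuclideanSpace ℝ (Fin (d + 1))) :
    EuclideanSpace ℝ (Fin d) :=
  WithLp.toLp 2 fun i : Fin d => y i.castSucc

/-- The family `K` (in `ℝᵈ'`) is well separated: any points chosen from the convex hulls
of at most `d' + 1` of the members are affinely independent. -/
def WellSeparatedIn (d' : ℕ) {n : ℕ} (K : Fin n → Set (EuclideanSpace ℝ (Fin d'))) : Prop :=
  ∀ s : Finset (Fin n), s.card ≤ d' + 1 →
    ∀ x : Fin n → EuclideanSpace ℝ (Fin d'),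
      (∀ i ∈ s, x i ∈ convexHull ℝ (K i)) →
      AffineIndependent ℝ (fun i : s => x i)

/- Projecting to `ℝᵈ` undoes the lifting, so it maps the convex hull of `ℓ(Kᵢ)` onto that
of `Kᵢ`. Points of the lifted hulls therefore project to points of the original hulls, which are
affinely independent, and affine independence pulls back along an affine map. -/

noncomputable def pprojLinear (d : ℕ) :
    EuclideanSpace ℝ (Fin (d + 1)) →ₗ[ℝ] EuclideanSpace ℝ (Fin d) where
  toFun := pproj d
  map_add' _ _ := rfl
  map_smul' _ _ := rfl

lemma pprojLinear_plift (d : ℕ) (x : EuclideanSpace ℝ (Fin d)) :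
    pprojLinear d (plift d x) = x := by
  ext i
  show plift d x i.castSucc = x i
  simp [plift]

lemma image_pprojLinear_convexHull_plift (d : ℕ) (K : Set (EuclideanSpace ℝ (Fin d))) :
    pprojLinear d '' convexHull ℝ (plift d '' K) = convexHull ℝ K := by
  simp only [LinearMap.image_convexHull, image_image, pprojLinear_plift, image_id']

theorem WellSeparatedIn.of_affineMap {d d' n : ℕ} (hn : n ≤ d + 1)
    {K : Fin n → Set (EuclideanSpace ℝ (Fin d))} (hK : WellSeparatedIn d K)
    (f : EuclideanSpace ℝ (Fin d') →ᵃ[ℝ] EuclideanSpace ℝ (Fin d))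
    {L : Fin n → Set (EuclideanSpace ℝ (Fin d'))}
    (hLK : ∀ i, f '' convexHull ℝ (L i) ⊆ convexHull ℝ (K i)) :
    WellSeparatedIn d' L := by
  intro s _ x hx
  have hcard : s.card ≤ d + 1 := (Finset.card_le_univ s).trans (by simpa using hn)
  exact (hK s hcard (f ∘ x) fun i hi => hLK i (mem_image_of_mem f (hx i hi))).of_comp f

theorem stmt13_general (d : ℕ) (K : Fin (d + 1) → Set (EuclideanSpace ℝ (Fin d)))
    (hws : WellSeparatedIn d K) :
    WellSeparatedIn (d + 1) (fun i => convexHull ℝ (plift d '' K i)) := by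
  refine hws.of_affineMap le_rfl (pprojLinear d).toAffineMap fun i => ?_
  rw [(convex_convexHull ℝ _).convexHull_eq]
  exact (image_pprojLinear_convexHull_plift d (K i)).le

theorem stmt13 (d : ℕ) (K : Fin (d + 1) → Set (EuclideanSpace ℝ (Fin d)))
    (hcpt : ∀ i, IsCompact (K i)) (hconn : ∀ i, IsConnected (K i))
    (hws : WellSeparatedIn d K) :
    WellSeparatedIn (d + 1) (fun i => convexHull ℝ (plift d '' K i)) :=
  stmt13_general d K hws
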